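/- For the tandem walk (step set {(1,0),(0,−1),(−1,1)}, each step with weight 1/3), the function h : ℤ² → ℝ defined by h(i,j) = (i+1)(j+1)(i+j+2) for i,j ≥ 0 and h(i,j) = 0 otherwise, is discrete harmonic: (Δh)(i,j) = 0 for all i,j ≥ 0. -/

import Mathlib

/-- The discrete Laplacian of the tandem walk (steps `(1,0)`, `(0,−1)`, `(−1,1)`,
weight `1/3` each), defined to be `0` outside the quarter plane. -/
noncomputable def tandemLap (h : ℤ → ℤ → ℝ) : ℤ → ℤ → ℝ :=
  fun i j =>
    if 0 ≤ i ∧ 0 ≤ j then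
      (h (i + 1) j + h i (j - 1) + h (i - 1) (j + 1)) / 3 - h i j
    else 0

/-
The polynomial `p(i,j) = (i+1)(j+1)(i+j+2)` vanishes on the lines `i = -1` and `j = -1`, so its
extension by zero agrees with `p` at every neighbour of a point of the quarter plane. The Laplacian
of `h` there is thus that of `p`, and `p` is harmonic on all of `ℤ²` by a polynomial identity.
-/

def tandemHarmonic (i j : ℤ) : ℝ :=
  ((i : ℝ) + 1) * ((j : ℝ) + 1) * ((i : ℝ) + (j : ℝ) + 2)

theorem tandemHarmonic_neg_one_left (j : ℤ) : tandemHarmonic (-1) j = 0 := by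
  simp [tandemHarmonic]

theorem tandemHarmonic_neg_one_right (i : ℤ) : tandemHarmonic i (-1) = 0 := by
  simp [tandemHarmonic]

theorem tandemHarmonic_mean (i j : ℤ) :
    (tandemHarmonic (i + 1) j + tandemHarmonic i (j - 1) + tandemHarmonic (i - 1) (j + 1)) / 3 =
      tandemHarmonic i j := by
  simp only [tandemHarmonic]
  push_cast
  ring

theorem ite_quarterPlane_eq_of_vanishing {f : ℤ → ℤ → ℝ}
    (hleft : ∀ j, f (-1) j = 0) (hright : ∀ i, f i (-1) = 0) {i j : ℤ}
    (hi : -1 ≤ i) (hj : -1 ≤ j) :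
    (if 0 ≤ i ∧ 0 ≤ j then f i j else 0) = f i j := by
  split_ifs with hij
  · rfl
  · rcases not_and_or.mp hij with hi' | hj'
    · obtain rfl : i = -1 := by omega
      exact (hleft j).symm
    · obtain rfl : j = -1 := by omega
      exact (hright i).symm

theorem tandemLap_eq_of_eqOn {h f : ℤ → ℤ → ℝ}
    (hf : ∀ i j, -1 ≤ i → -1 ≤ j → h i j = f i j) {i j : ℤ} (hi : 0 ≤ i) (hj : 0 ≤ j) :
    tandemLap h i j = (f (i + 1) j + f i (j - 1) + f (i - 1) (j + 1)) / 3 - f i j := by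
  rw [tandemLap, if_pos ⟨hi, hj⟩, hf _ _ (by omega) (by omega), hf _ _ (by omega) (by omega),
    hf _ _ (by omega) (by omega), hf _ _ (by omega) (by omega)]

theorem tandem_walk_harmonic
    (h : ℤ → ℤ → ℝ)
    (hh : ∀ i j : ℤ, h i j =
      if 0 ≤ i ∧ 0 ≤ j then ((i : ℝ) + 1) * ((j : ℝ) + 1) * ((i : ℝ) + (j : ℝ) + 2)
      else 0) :
    ∀ i j : ℤ, 0 ≤ i → 0 ≤ j → tandemLap h i j = 0 := by
  have heq : ∀ i j, -1 ≤ i → -1 ≤ j → h i j = tandemHarmonic i j := fun i j hi hj =>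
    (hh i j).trans <| ite_quarterPlane_eq_of_vanishing tandemHarmonic_neg_one_left
      tandemHarmonic_neg_one_right hi hj
  intro i j hi hj
  rw [tandemLap_eq_of_eqOn heq hi hj, tandemHarmonic_mean, sub_self]
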